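/- arXiv:1803.02834 — 3 statements merged into one kernel-verified Lean document; each statement's English description precedes it below -/
import Mathlib

section
/- Let d ≥ 1 and ξ ≥ 0, and set A := ξ•(Φ_d − (1/d²)•I), a Hermitian matrix indexed by (Fin d × Fin d). Then the positive semidefinite square root of AᴴA satisfies √(AᴴA) = ξ•( ((d²−1)/d²)•Φ_d + (1/d²)•(I − Φ_d) ), where I is the identity matrix indexed by (Fin d × Fin d). -/
/-!
`Φ_d` is an orthogonal projection (it is `|v⟩⟨v| / ⟨v|v⟩` for `v = ∑ᵢ |i⟩|i⟩`), so
`A = a • Φ_d + b • (1 - Φ_d)` with `a = ξ (1 - 1/d²)` and `b = -ξ/d²`. Since `Φ_d` and `1 - Φ_d`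
are orthogonal idempotents, `AᴴA = a² • Φ_d + b² • (1 - Φ_d)`, and `|a| • Φ_d + |b| • (1 - Φ_d)`
is a positive square root of it (itself a square of the same shape); uniqueness of positive square
roots in the continuous functional calculus finishes the proof.
-/

open Matrix
open scoped ComplexOrder

open Classical in
/-- Positive semidefinite square root of a matrix (zero if not PSD). -/
noncomputable def msqrt {n : Type*} [Fintype n] [DecidableEq n] (A : Matrix n n ℂ) :
    Matrix n n ℂ :=
  if h : A.PosSemidef then
    h.1.eigenvectorUnitary.1 * diagonal ((↑) ∘ (√·) ∘ h.1.eigenvalues) *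
      (star h.1.eigenvectorUnitary : Matrix n n ℂ) else 0

/-- The maximally entangled projector `Φ_d`. -/
noncomputable def maxEnt (d : ℕ) : Matrix (Fin d × Fin d) (Fin d × Fin d) ℂ :=
  Matrix.of fun p q => if p.1 = p.2 ∧ q.1 = q.2 then 1 / (d : ℂ) else 0


namespace IsStarProjection

variable {A : Type*} [Ring A] [Algebra ℝ A] {p : A}

lemma smul_add_smul_one_sub_mul [Star A] (hp : IsStarProjection p) (a b c e : ℝ) :
    (a • p + b • (1 - p)) * (c • p + e • (1 - p)) = (a * c) • p + (b * e) • (1 - p) := by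
  simp only [add_mul, mul_add, smul_mul_smul_comm, hp.isIdempotentElem.eq, hp.mul_one_sub_self,
    hp.one_sub_mul_self, hp.isIdempotentElem.one_sub.eq, smul_zero, add_zero, zero_add]

variable [StarRing A]

lemma star_smul_add_smul_one_sub [StarModule ℝ A] (hp : IsStarProjection p) (a b : ℝ) :
    star (a • p + b • (1 - p)) = a • p + b • (1 - p) := by
  simp [star_sub, hp.isSelfAdjoint.star_eq]

lemma star_smul_add_smul_one_sub_mul_self [StarModule ℝ A] (hp : IsStarProjection p) (a b : ℝ) :
    star (a • p + b • (1 - p)) * (a • p + b • (1 - p)) = (a ^ 2) • p + (b ^ 2) • (1 - p) := by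
  rw [hp.star_smul_add_smul_one_sub, hp.smul_add_smul_one_sub_mul, sq, sq]

variable [PartialOrder A] [StarOrderedRing A] [StarModule ℝ A]

lemma smul_add_smul_one_sub_nonneg (hp : IsStarProjection p) {a b : ℝ} (ha : 0 ≤ a) (hb : 0 ≤ b) :
    0 ≤ a • p + b • (1 - p) := by
  have h := star_mul_self_nonneg (√a • p + √b • (1 - p))
  rwa [hp.star_smul_add_smul_one_sub_mul_self, Real.sq_sqrt ha, Real.sq_sqrt hb] at h

variable [TopologicalSpace A] [IsSemitopologicalRing A] [T2Space A]
  [ContinuousFunctionalCalculus ℝ A IsSelfAdjoint] [NonnegSpectrumClass ℝ A]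

lemma sqrt_star_smul_add_smul_one_sub_mul_self (hp : IsStarProjection p) (a b : ℝ) :
    CFC.sqrt (star (a • p + b • (1 - p)) * (a • p + b • (1 - p))) = |a| • p + |b| • (1 - p) := by
  refine CFC.sqrt_unique ?_ (hp.smul_add_smul_one_sub_nonneg (abs_nonneg a) (abs_nonneg b))
  rw [hp.smul_add_smul_one_sub_mul, hp.star_smul_add_smul_one_sub_mul_self, abs_mul_abs_self,
    abs_mul_abs_self, sq, sq]

end IsStarProjection

open scoped MatrixOrder in
lemma msqrt_eq_sqrt {n : Type*} [Fintype n] [DecidableEq n] (A : Matrix n n ℂ) :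
    msqrt A = CFC.sqrt A := by
  unfold msqrt
  split_ifs with h
  · rw [CFC.sqrt_eq_real_sqrt A h.nonneg, cfcₙ_eq_cfc, h.1.cfc_eq]
    rfl
  · exact (CFC.sqrt_of_not_nonneg (by simpa [Matrix.nonneg_iff_posSemidef] using h)).symm

lemma isStarProjection_inv_smul_vecMulVec {n 𝕜 : Type*} [Fintype n] [Field 𝕜] [StarRing 𝕜]
    (v : n → 𝕜) : IsStarProjection ((star v ⬝ᵥ v)⁻¹ • vecMulVec v (star v)) where
  isIdempotentElem := by
    rw [IsIdempotentElem, smul_mul_smul_comm, vecMulVec_mul_vecMulVec, vecMulVec_smul, smul_smul]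
    congr 1
    by_cases h : star v ⬝ᵥ v = 0 <;> field_simp [h]
  isSelfAdjoint := by
    rw [IsSelfAdjoint, Matrix.star_eq_conjTranspose, conjTranspose_smul, conjTranspose_vecMulVec,
      star_star, star_inv₀, ← star_dotProduct_star, star_star]

-- The unnormalised maximally entangled vector `∑ᵢ |i⟩|i⟩`.
def maxEntVec (d : ℕ) : Fin d × Fin d → ℂ := fun p => if p.1 = p.2 then 1 else 0

lemma star_maxEntVec (d : ℕ) : star (maxEntVec d) = maxEntVec d := by
  ext p
  simp [maxEntVec, apply_ite]

lemma maxEntVec_dotProduct_self (d : ℕ) : maxEntVec d ⬝ᵥ maxEntVec d = d := by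
  simp [maxEntVec, dotProduct, Fintype.sum_prod_type]

lemma maxEnt_eq_inv_smul_vecMulVec (d : ℕ) :
    maxEnt d = (d : ℂ)⁻¹ • vecMulVec (maxEntVec d) (maxEntVec d) := by
  ext p q
  by_cases hp : p.1 = p.2 <;> by_cases hq : q.1 = q.2 <;>
    simp [maxEnt, maxEntVec, vecMulVec_apply, hp, hq]

lemma isStarProjection_maxEnt (d : ℕ) : IsStarProjection (maxEnt d) := by
  simpa only [star_maxEntVec, maxEntVec_dotProduct_self, ← maxEnt_eq_inv_smul_vecMulVec]
    using isStarProjection_inv_smul_vecMulVec (maxEntVec d)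

theorem abs_of_isotropic_difference (d : ℕ) (hd : 1 ≤ d) (ξ : ℝ) (hξ : 0 ≤ ξ)
    (A : Matrix (Fin d × Fin d) (Fin d × Fin d) ℂ)
    (hA : A = ξ • (maxEnt d - ((1 : ℝ) / (d : ℝ) ^ 2) • (1 : Matrix (Fin d × Fin d) (Fin d × Fin d) ℂ))) :
    msqrt (Aᴴ * A) =
      ξ • ((((d : ℝ) ^ 2 - 1) / (d : ℝ) ^ 2) • maxEnt d +
        ((1 : ℝ) / (d : ℝ) ^ 2) • ((1 : Matrix (Fin d × Fin d) (Fin d × Fin d) ℂ) - maxEnt d)) := by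
  have hd2 : (1 : ℝ) ≤ (d : ℝ) ^ 2 := one_le_pow₀ (by exact_mod_cast hd)
  have hA' : A = (ξ * (((d : ℝ) ^ 2 - 1) / (d : ℝ) ^ 2)) • maxEnt d +
      (-(ξ * (1 / (d : ℝ) ^ 2))) • (1 - maxEnt d) := by
    rw [hA, sub_div, div_self (zero_lt_one.trans_le hd2).ne']
    module
  have ha : 0 ≤ ξ * (((d : ℝ) ^ 2 - 1) / (d : ℝ) ^ 2) :=
    mul_nonneg hξ (div_nonneg (sub_nonneg.mpr hd2) (sq_nonneg _))
  have hb : 0 ≤ ξ * (1 / (d : ℝ) ^ 2) := by positivity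
  open scoped MatrixOrder in
  rw [msqrt_eq_sqrt, ← star_eq_conjTranspose, hA',
    (isStarProjection_maxEnt d).sqrt_star_smul_add_smul_one_sub_mul_self, abs_neg,
    abs_of_nonneg ha, abs_of_nonneg hb, smul_add, smul_smul, smul_smul]
end

section
/- Let d ≥ 1 and let p be a real number with 0 ≤ p ≤ 1. Then ‖Φ_d − ((1−p)•Φ_d + (p/d²)•I)‖₁ = 2p(d²−1)/d², where I is the identity matrix indexed by (Fin d × Fin d). In other words, the trace distance between the Choi matrix of the identity channel and the isotropic Choi matrix of a depolarizing channel with depolarizing probability p equals 2p(d²−1)/d². -/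
/-!
`Φ_d` is an orthogonal projection of trace one, and the difference equals
`(p - p/d²) Φ_d - (p/d²) (1 - Φ_d)`, a combination of two complementary projections.
For such a combination `a P - b (1 - P)` with `a, b ≥ 0`, the square root of its square is
`a P + b (1 - P)`, so its trace norm is `a Tr P + b Tr (1 - P) = (p - p/d²) + (p/d²)(d² - 1)`.
-/

open Matrix
open scoped ComplexOrder

/-- Trace norm of a complex square matrix: `Tr √(Aᴴ A)`. -/
noncomputable def traceNorm {n : Type*} [Fintype n] [DecidableEq n] (A : Matrix n n ℂ) : ℝ :=
  ((msqrt (Aᴴ * A)).trace).re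

open scoped MatrixOrder in
lemma msqrt_eq_of_mul_self {n : Type*} [Fintype n] [DecidableEq n] {A B : Matrix n n ℂ}
    (hA : A.PosSemidef) (hB : B.PosSemidef) (h : B * B = A) : msqrt A = B := by
  have h1 : CFC.sqrt A = B := CFC.sqrt_unique h hB.nonneg
  rw [CFC.sqrt_eq_cfc, cfc_nnreal_eq_real _ A hA.nonneg, hA.1.cfc_eq] at h1
  rw [← h1, msqrt, dif_pos hA]
  simp only [IsHermitian.cfc, Unitary.conjStarAlgAut_apply]
  congr 3
  funext i
  simp [hA.eigenvalues_nonneg i]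

lemma IsIdempotentElem.smul_add_smul_one_sub_mul {R A : Type*} [CommRing R] [Ring A]
    [Algebra R A] {P : A} (hP : IsIdempotentElem P) (a b c e : R) :
    (a • P + b • (1 - P)) * (c • P + e • (1 - P)) = (a * c) • P + (b * e) • (1 - P) := by
  have h₁ : P * (1 - P) = 0 := hP.mul_one_sub_self
  have h₂ : (1 - P) * P = 0 := hP.one_sub_mul_self
  simp only [add_mul, mul_add, smul_mul_smul_comm, hP.eq, hP.one_sub.eq, h₁, h₂, smul_zero,
    add_zero, zero_add]

section Projection

variable {n : Type*} [DecidableEq n] {P : Matrix n n ℂ}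

lemma Matrix.IsHermitian.smul_add_smul_one_sub (hP : P.IsHermitian) (a b : ℝ) :
    (a • P + b • (1 - P)).IsHermitian :=
  (hP.smul (IsSelfAdjoint.all a)).add ((isHermitian_one.sub hP).smul (IsSelfAdjoint.all b))

variable [Fintype n]

lemma Matrix.posSemidef_smul_add_smul_one_sub (hP : P.IsHermitian) (hP' : IsIdempotentElem P)
    {a b : ℝ} (ha : 0 ≤ a) (hb : 0 ≤ b) : (a • P + b • (1 - P)).PosSemidef := by
  have hC := hP.smul_add_smul_one_sub √a √b
  have h := posSemidef_conjTranspose_mul_self (√a • P + √b • (1 - P))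
  rwa [hC.eq, hP'.smul_add_smul_one_sub_mul, Real.mul_self_sqrt ha, Real.mul_self_sqrt hb] at h

theorem traceNorm_smul_sub_smul_one_sub (hP : P.IsHermitian) (hP' : IsIdempotentElem P)
    {a b : ℝ} (ha : 0 ≤ a) (hb : 0 ≤ b) :
    traceNorm (a • P - b • (1 - P)) = a * P.trace.re + b * (1 - P).trace.re := by
  have hA : a • P - b • (1 - P) = a • P + (-b) • (1 - P) := by rw [neg_smul, sub_eq_add_neg]
  have hsq : (a • P + b • (1 - P)) * (a • P + b • (1 - P)) =
      (a • P + (-b) • (1 - P))ᴴ * (a • P + (-b) • (1 - P)) := by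
    rw [(hP.smul_add_smul_one_sub a (-b)).eq, hP'.smul_add_smul_one_sub_mul,
      hP'.smul_add_smul_one_sub_mul, neg_mul_neg]
  rw [traceNorm, hA, msqrt_eq_of_mul_self (posSemidef_conjTranspose_mul_self _)
    (posSemidef_smul_add_smul_one_sub hP hP' ha hb) hsq]
  simp [trace_add, trace_smul]

end Projection

lemma maxEnt_isHermitian (d : ℕ) : (maxEnt d).IsHermitian := by
  ext ⟨i, k⟩ ⟨j, l⟩
  simp only [maxEnt, conjTranspose_apply, of_apply]
  split_ifs <;> simp_all

lemma isIdempotentElem_maxEnt (d : ℕ) : IsIdempotentElem (maxEnt d) := by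
  ext ⟨i, k⟩ ⟨j, l⟩
  simp only [maxEnt, mul_apply, of_apply, Fintype.sum_prod_type]
  by_cases h1 : i = k <;> by_cases h2 : j = l <;>
    simp [h1, h2, mul_ite, ite_mul, Finset.sum_ite_eq]
  field_simp

lemma trace_maxEnt {d : ℕ} (hd : d ≠ 0) : (maxEnt d).trace = 1 := by
  simp [maxEnt, trace, Fintype.sum_prod_type, hd]

lemma trace_one_sub_maxEnt {d : ℕ} (hd : d ≠ 0) :
    (1 - maxEnt d).trace = (d : ℂ) ^ 2 - 1 := by
  simp [trace_sub, trace_maxEnt hd, sq]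

theorem trace_dist_maxEnt_isotropic_general (d : ℕ) (hd : 1 ≤ d) (p : ℝ) (hp0 : 0 ≤ p) :
    traceNorm (maxEnt d -
        ((1 - p) • maxEnt d +
          (p / (d : ℝ) ^ 2) • (1 : Matrix (Fin d × Fin d) (Fin d × Fin d) ℂ))) =
      2 * p * ((d : ℝ) ^ 2 - 1) / (d : ℝ) ^ 2 := by
  have hd0 : d ≠ 0 := Nat.one_le_iff_ne_zero.mp hd
  have hd1 : (1 : ℝ) ≤ (d : ℝ) ^ 2 := one_le_pow₀ (Nat.one_le_cast.mpr hd)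
  set q := p / (d : ℝ) ^ 2
  have hq : q ≤ p := div_le_self hp0 hd1
  have hsplit : maxEnt d - ((1 - p) • maxEnt d + q • 1) =
      (p - q) • maxEnt d - q • (1 - maxEnt d) := by
    module
  rw [hsplit, traceNorm_smul_sub_smul_one_sub (maxEnt_isHermitian d) (isIdempotentElem_maxEnt d)
    (sub_nonneg.mpr hq) (div_nonneg hp0 (sq_nonneg _)), trace_maxEnt hd0, trace_one_sub_maxEnt hd0]
  simp only [q, Complex.one_re, Complex.sub_re, ← Complex.ofReal_natCast, ← Complex.ofReal_pow,
    Complex.ofReal_re]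
  field_simp
  ring

theorem trace_dist_maxEnt_isotropic (d : ℕ) (hd : 1 ≤ d) (p : ℝ) (hp0 : 0 ≤ p) (hp1 : p ≤ 1) :
    traceNorm (maxEnt d -
        ((1 - p) • maxEnt d +
          (p / (d : ℝ) ^ 2) • (1 : Matrix (Fin d × Fin d) (Fin d × Fin d) ℂ))) =
      2 * p * ((d : ℝ) ^ 2 - 1) / (d : ℝ) ^ 2 :=
  trace_dist_maxEnt_isotropic_general d hd p hp0
end

section
/- Let p, ξ be real numbers with 0 ≤ p ≤ 1 and 0 ≤ ξ ≤ 1. Then ‖ρ_sim(p,ξ) − ρ_p‖₁ = ξ·( (1−p)/2 + √(1−p) ). That is, the trace distance between the Choi matrix of the amplitude damping channel with damping probability p and the Choi matrix of its M-port PBT simulation with depolarizing probability ξ equals ξ((1−p)/2 + √(1−p)). -/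
open Matrix
open scoped ComplexOrder

/-- Choi matrix of the amplitude damping channel with damping probability `p`
(rows/columns ordered 00,01,10,11). -/
noncomputable def rhoAD (p : ℝ) : Matrix (Fin 4) (Fin 4) ℂ :=
  !![1 / 2, 0, 0, (Real.sqrt (1 - p) : ℂ) / 2;
     0, 0, 0, 0;
     0, 0, (p : ℂ) / 2, 0;
     (Real.sqrt (1 - p) : ℂ) / 2, 0, 0, ((1 - p : ℝ) : ℂ) / 2]

/-- Choi matrix of the M-port PBT simulation of the amplitude damping channel
(rows/columns ordered 00,01,10,11). -/
noncomputable def rhoSim (p ξ : ℝ) : Matrix (Fin 4) (Fin 4) ℂ :=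
  !![((1 / 2 - (1 - p) * ξ / 4 : ℝ) : ℂ), 0, 0,
       ((Real.sqrt (1 - p) * (1 / 2 - ξ / 2) : ℝ) : ℂ);
     0, (((1 - p) * ξ / 4 : ℝ) : ℂ), 0, 0;
     0, 0, (((1 / 2 - ξ / 4) * p + ξ / 4 : ℝ) : ℂ), 0;
     ((Real.sqrt (1 - p) * (1 / 2 - ξ / 2) : ℝ) : ℂ), 0, 0,
       (((1 / 2 - ξ / 4) * (1 - p) : ℝ) : ℂ)]

/-!
With `s = √(1 - p)`, `ρ_sim(p, ξ) - ρ_p = ξ M(s)` for a real symmetric `M(s)` with eigenvalues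
`-s²/4 - s/2`, `s/2 - s²/4` (on `e₀₀ ± e₁₁`) and `s²/4` twice. Flipping the sign of the first
gives a positive semidefinite `|M(s)|` (as `s ≤ 2`) squaring to `M(s)ᴴ M(s)`, so by uniqueness of
positive square roots `‖ξ M(s)‖₁ = ξ Tr |M(s)| = ξ (s + s²/2)`.
-/

open scoped MatrixOrder

theorem msqrt_eq_cfcSqrt {n : Type*} [Fintype n] [DecidableEq n] {A : Matrix n n ℂ}
    (hA : A.PosSemidef) : msqrt A = CFC.sqrt A := by
  rw [msqrt, dif_pos hA, CFC.sqrt_eq_cfc, cfc_nnreal_eq_real _ _ hA.nonneg, hA.1.cfc_eq,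
    IsHermitian.cfc]
  simp [Function.comp_def, max_eq_left (hA.eigenvalues_nonneg _)]

theorem traceNorm_eq_re_trace {n : Type*} [Fintype n] [DecidableEq n] {A S : Matrix n n ℂ}
    (hS : S.PosSemidef) (hSA : S * S = Aᴴ * A) : traceNorm A = S.trace.re := by
  rw [traceNorm, msqrt_eq_cfcSqrt (posSemidef_conjTranspose_mul_self A),
    CFC.sqrt_unique hSA hS.nonneg]

/-- `M(s)`, i.e. `(ρ_sim(p, ξ) - ρ_p) / ξ` for `s = √(1 - p)`. -/
noncomputable def rhoDiff (s : ℝ) : Matrix (Fin 4) (Fin 4) ℂ :=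
  !![-(s : ℂ) ^ 2 / 4, 0, 0, -(s : ℂ) / 2;
     0, (s : ℂ) ^ 2 / 4, 0, 0;
     0, 0, (s : ℂ) ^ 2 / 4, 0;
     -(s : ℂ) / 2, 0, 0, -(s : ℂ) ^ 2 / 4]

noncomputable def rhoDiffAbs (s : ℝ) : Matrix (Fin 4) (Fin 4) ℂ :=
  !![(s : ℂ) / 2, 0, 0, (s : ℂ) ^ 2 / 4;
     0, (s : ℂ) ^ 2 / 4, 0, 0;
     0, 0, (s : ℂ) ^ 2 / 4, 0;
     (s : ℂ) ^ 2 / 4, 0, 0, (s : ℂ) / 2]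

theorem rhoSim_sub_rhoAD {p : ℝ} (hp : p ≤ 1) (ξ : ℝ) :
    rhoSim p ξ - rhoAD p = ξ • rhoDiff √(1 - p) := by
  have hpc : (p : ℂ) = 1 - (√(1 - p) : ℂ) ^ 2 := by
    rw [← Complex.ofReal_pow, Real.sq_sqrt (by linarith)]; push_cast; ring
  ext i j
  fin_cases i <;> fin_cases j <;> simp [rhoSim, rhoAD, rhoDiff] <;> push_cast [hpc]
  all_goals ring_nf

theorem rhoDiffAbs_mul_self (s : ℝ) :
    rhoDiffAbs s * rhoDiffAbs s = (rhoDiff s)ᴴ * rhoDiff s := by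
  ext i j
  fin_cases i <;> fin_cases j <;>
    simp [rhoDiff, rhoDiffAbs, mul_apply, Fin.sum_univ_four, conjTranspose_apply, map_ofNat] <;>
    ring

theorem rhoDiffAbs_eq_sum_vecMulVec (s : ℝ) :
    rhoDiffAbs s =
      ((2 * s + s ^ 2) / 8 : ℝ) • vecMulVec ![1, 0, 0, 1] (star ![1, 0, 0, 1]) +
      ((2 * s - s ^ 2) / 8 : ℝ) • vecMulVec ![1, 0, 0, -1] (star ![1, 0, 0, -1]) +
      (s ^ 2 / 4 : ℝ) • diagonal ![0, 1, 1, 0] := by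
  ext i j
  fin_cases i <;> fin_cases j <;> simp [rhoDiffAbs, vecMulVec] <;> ring

theorem rhoDiffAbs_posSemidef {s : ℝ} (hs0 : 0 ≤ s) (hs2 : s ≤ 2) :
    (rhoDiffAbs s).PosSemidef := by
  rw [rhoDiffAbs_eq_sum_vecMulVec]
  refine (((posSemidef_vecMulVec_self_star _).smul ?_).add
    ((posSemidef_vecMulVec_self_star _).smul ?_)).add (PosSemidef.diagonal ?_ |>.smul ?_)
  · positivity
  · nlinarith
  · intro i; fin_cases i <;> simp
  · positivity

theorem trace_rhoDiffAbs (s : ℝ) : (rhoDiffAbs s).trace = ((s + s ^ 2 / 2 : ℝ) : ℂ) := by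
  simp [rhoDiffAbs, trace, Fin.sum_univ_four]; ring

theorem trace_dist_amplitude_damping_sim_general (p ξ : ℝ)
    (hp0 : 0 ≤ p) (hp1 : p ≤ 1) (hξ0 : 0 ≤ ξ) :
    traceNorm (rhoSim p ξ - rhoAD p) = ξ * ((1 - p) / 2 + Real.sqrt (1 - p)) := by
  have hs2 : √(1 - p) ≤ 2 := by
    rw [Real.sqrt_le_left (by norm_num)]; linarith
  have habs_sq : (ξ • rhoDiffAbs √(1 - p)) * (ξ • rhoDiffAbs √(1 - p)) =
      (ξ • rhoDiff √(1 - p))ᴴ * (ξ • rhoDiff √(1 - p)) := by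
    simp only [conjTranspose_smul, star_trivial, smul_mul_smul, rhoDiffAbs_mul_self]
  rw [rhoSim_sub_rhoAD hp1, traceNorm_eq_re_trace
    ((rhoDiffAbs_posSemidef (Real.sqrt_nonneg _) hs2).smul hξ0) habs_sq, trace_smul,
    trace_rhoDiffAbs, Complex.real_smul, Complex.re_ofReal_mul, Complex.ofReal_re,
    Real.sq_sqrt (sub_nonneg.2 hp1)]
  ring

theorem trace_dist_amplitude_damping_sim (p ξ : ℝ)
    (hp0 : 0 ≤ p) (hp1 : p ≤ 1) (hξ0 : 0 ≤ ξ) (hξ1 : ξ ≤ 1) :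
    traceNorm (rhoSim p ξ - rhoAD p) = ξ * ((1 - p) / 2 + Real.sqrt (1 - p)) :=
  trace_dist_amplitude_damping_sim_general p ξ hp0 hp1 hξ0
end
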